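/- Let n ∈ ℕ with n ≥ 1, let θ ∈ (0, π/2) and h > 0 be cone parameters, and let ε > 0. Then there exists a constant C > 0, depending only on n, θ, h and ε, with the following property: for every bounded open set Ω ⊆ ℝⁿ satisfying the cone property — for every x in the closure of Ω there exists a unit vector ξ ∈ ℝⁿ such that the open cone {x + y : y ∈ ℝⁿ, 0 < ‖y‖ < h, ⟨y, ξ⟩ > ‖y‖·cos θ} is contained in Ω — and every continuously differentiable function v : ℝⁿ → ℝ (ContDiff ℝ 1), one has sup_{x ∈ closure Ω} |v(x)| ≤ ε·(sup_{x ∈ closure Ω} |v(x)| + sup_{x ∈ closure Ω} ‖fderiv ℝ v (x)‖) + C·∫_Ω |v(x)| dx. -/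

import Mathlib

open MeasureTheory Filter Set

/-!
Let `x₀` be a maximum point of `|v|` on `closure Ω` and let `ξ` be the axis of the cone at `x₀`.
By the mean value theorem, along every segment from `x₀` into the cone of height `δ = min h ε`
the function `|v|` stays above `|v x₀| - δ ‖Dv‖_∞ ≥ |v x₀| - ε ‖Dv‖_∞`. Integrating over that
cone, whose volume `c > 0` is independent of `x₀` and `ξ` since linear isometries preserve volume, gives
`c (sup |v| - ε ‖Dv‖_∞) ≤ ∫_Ω |v|`, so `C = 1 / c` works.
-/

namespace Real

-- A supremum over an empty index set is `sSup ∅ = 0` in `ℝ`, hence `0 ≤ B`.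
theorem biSup_le {α : Type*} {s : Set α} {f : α → ℝ} {B : ℝ} (h0 : 0 ≤ B)
    (h : ∀ x ∈ s, f x ≤ B) : (⨆ x ∈ s, f x) ≤ B :=
  Real.iSup_le (fun x => Real.iSup_le (fun hx => h x hx) h0) h0

theorem le_biSup {α : Type*} {s : Set α} {f : α → ℝ} (hf : BddAbove (f '' s)) {x : α}
    (hx : x ∈ s) : f x ≤ ⨆ y ∈ s, f y :=
  le_ciSup₂ (f := fun y (_ : y ∈ s) => f y)
    (hf.mono <| iUnion_subset fun _ => range_subset_iff.2 fun hy => mem_image_of_mem f hy) x hx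

end Real

section OpenCone

variable {E : Type*} [NormedAddCommGroup E] [InnerProductSpace ℝ E]

def openCone (ξ : E) (θ r : ℝ) : Set E :=
  {y | 0 < ‖y‖ ∧ ‖y‖ < r ∧ ‖y‖ * Real.cos θ < inner ℝ y ξ}

variable {ξ : E} {θ r : ℝ}

theorem isOpen_openCone (ξ : E) (θ r : ℝ) : IsOpen (openCone ξ θ r) :=
  (isOpen_lt continuous_const continuous_norm).inter <|
    (isOpen_lt continuous_norm continuous_const).inter <|
      isOpen_lt (continuous_norm.mul continuous_const) (continuous_id.inner continuous_const)

theorem openCone_subset_ball (ξ : E) (θ r : ℝ) : openCone ξ θ r ⊆ Metric.ball 0 r :=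
  fun _ hy => mem_ball_zero_iff.2 hy.2.1

theorem measure_openCone_lt_top [MeasurableSpace E] [ProperSpace E] (μ : Measure E)
    [IsFiniteMeasureOnCompacts μ] (ξ : E) (θ r : ℝ) : μ (openCone ξ θ r) < ⊤ :=
  (measure_mono (openCone_subset_ball ξ θ r)).trans_lt measure_ball_lt_top

theorem openCone_nonempty (hξ : ‖ξ‖ = 1) (hθ : Real.cos θ < 1) (hr : 0 < r) :
    (openCone ξ θ r).Nonempty := by
  have hnorm : ‖(r / 2) • ξ‖ = r / 2 := by
    rw [norm_smul, hξ, mul_one, Real.norm_of_nonneg (by positivity)]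
  refine ⟨(r / 2) • ξ, ?_, ?_, ?_⟩
  · rw [hnorm]; positivity
  · rw [hnorm]; linarith
  · rw [hnorm, real_inner_smul_left, real_inner_self_eq_norm_sq, hξ]
    nlinarith

theorem smul_mem_openCone {y : E} (hy : y ∈ openCone ξ θ r) {t : ℝ} (ht₀ : 0 < t)
    (ht₁ : t ≤ 1) : t • y ∈ openCone ξ θ r := by
  obtain ⟨hy₀, hyr, hyθ⟩ := hy
  refine ⟨?_, ?_, ?_⟩ <;> rw [norm_smul, Real.norm_of_nonneg ht₀.le]
  · positivity
  · exact (mul_le_of_le_one_left (norm_nonneg y) ht₁).trans_lt hyr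
  · rw [real_inner_smul_left, mul_assoc]
    exact mul_lt_mul_of_pos_left hyθ ht₀

theorem measureReal_openCone_pos [MeasurableSpace E] [ProperSpace E] (μ : Measure E)
    [IsFiniteMeasureOnCompacts μ] [μ.IsOpenPosMeasure] (hξ : ‖ξ‖ = 1) (hθ : Real.cos θ < 1)
    (hr : 0 < r) : 0 < μ.real (openCone ξ θ r) :=
  ENNReal.toReal_pos ((isOpen_openCone ξ θ r).measure_ne_zero μ (openCone_nonempty hξ hθ hr))
    (measure_openCone_lt_top μ ξ θ r).ne

theorem preimage_openCone (f : E ≃ₗᵢ[ℝ] E) (ξ : E) (θ r : ℝ) :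
    f ⁻¹' openCone (f ξ) θ r = openCone ξ θ r := by
  ext y
  simp [openCone, LinearIsometryEquiv.inner_map_map]

theorem volume_openCone_of_norm_eq [FiniteDimensional ℝ E] [MeasurableSpace E] [BorelSpace E]
    {ξ ξ' : E} (h : ‖ξ‖ = ‖ξ'‖) (θ r : ℝ) :
    volume (openCone ξ θ r) = volume (openCone ξ' θ r) := by
  set f := Submodule.reflection (ℝ ∙ (ξ - ξ'))ᗮ
  rw [← preimage_openCone f, f.measurePreserving.measure_preimage
    (isOpen_openCone _ θ r).measurableSet.nullMeasurableSet, Submodule.reflection_sub h]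

variable {Ω : Set E} {x₀ : E}

theorem segment_subset_closure_of_openCone (hx₀ : x₀ ∈ closure Ω)
    (hΩ : ∀ z ∈ openCone ξ θ r, x₀ + z ∈ Ω) {y : E} (hy : y ∈ openCone ξ θ r) :
    segment ℝ x₀ (x₀ + y) ⊆ closure Ω := by
  rw [segment_eq_image']
  rintro _ ⟨t, ⟨ht₀, ht₁⟩, rfl⟩
  rw [add_sub_cancel_left]
  rcases ht₀.eq_or_lt with rfl | ht₀
  · simpa using hx₀
  · exact subset_closure (hΩ _ (smul_mem_openCone hy ht₀ ht₁))

theorem abs_sub_mul_le_abs_of_mem_openCone {v : E → ℝ} (hv : Differentiable ℝ v) {K : ℝ}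
    (hK : ∀ z ∈ closure Ω, ‖fderiv ℝ v z‖ ≤ K) (hx₀ : x₀ ∈ closure Ω)
    (hΩ : ∀ z ∈ openCone ξ θ r, x₀ + z ∈ Ω) {y : E} (hy : y ∈ openCone ξ θ r) :
    |v x₀| - K * r ≤ |v (x₀ + y)| := by
  have hseg := segment_subset_closure_of_openCone hx₀ hΩ hy
  have hmv : ‖v (x₀ + y) - v x₀‖ ≤ K * ‖x₀ + y - x₀‖ :=
    (convex_segment _ _).norm_image_sub_le_of_norm_fderiv_le (fun z _ => hv z)
      (fun z hz => hK z (hseg hz)) (left_mem_segment ℝ _ _) (right_mem_segment ℝ _ _)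
  rw [add_sub_cancel_left, Real.norm_eq_abs, abs_sub_comm] at hmv
  have hKy : K * ‖y‖ ≤ K * r :=
    mul_le_mul_of_nonneg_left hy.2.1.le ((norm_nonneg _).trans (hK x₀ hx₀))
  linarith [abs_sub_abs_le_abs_sub (v x₀) (v (x₀ + y))]

theorem mul_measureReal_openCone_le_setIntegral [MeasurableSpace E] [BorelSpace E]
    [ProperSpace E] (μ : Measure E) [μ.IsAddLeftInvariant] [IsFiniteMeasureOnCompacts μ]
    {v : E → ℝ} (hvΩ : IntegrableOn v Ω μ) (hv : Differentiable ℝ v) {K : ℝ}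
    (hK : ∀ z ∈ closure Ω, ‖fderiv ℝ v z‖ ≤ K) (hx₀ : x₀ ∈ closure Ω)
    (hΩ : ∀ z ∈ openCone ξ θ r, x₀ + z ∈ Ω) :
    (|v x₀| - K * r) * μ.real (openCone ξ θ r) ≤ ∫ x in Ω, |v x| ∂μ := by
  set S := (fun p => -x₀ + p) ⁻¹' openCone ξ θ r
  have hSΩ : S ⊆ Ω := fun p hp => by simpa using hΩ _ hp
  have hS : μ S = μ (openCone ξ θ r) := measure_preimage_add μ (-x₀) _
  have hSfin : μ S ≠ ⊤ := hS ▸ (measure_openCone_lt_top μ ξ θ r).ne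
  calc (|v x₀| - K * r) * μ.real (openCone ξ θ r) = (|v x₀| - K * r) * μ.real S := by
        rw [Measure.real, Measure.real, hS]
    _ ≤ ∫ x in S, |v x| ∂μ :=
        setIntegral_ge_of_const_le_real
          ((isOpen_openCone ξ θ r).measurableSet.preimage (measurable_const_add _)) hSfin
          (fun p hp => by simpa using abs_sub_mul_le_abs_of_mem_openCone hv hK hx₀ hΩ hp)
          (IntegrableOn.mono_set hvΩ.abs hSΩ)
    _ ≤ ∫ x in Ω, |v x| ∂μ :=
        setIntegral_mono_set hvΩ.abs (Eventually.of_forall fun _ => abs_nonneg _)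
          hSΩ.eventuallyLE

end OpenCone

theorem stmt13 (n : ℕ) (hn : 1 ≤ n) (θ h : ℝ) (hθ : θ ∈ Set.Ioo 0 (Real.pi / 2))
    (hh : 0 < h) (ε : ℝ) (hε : 0 < ε) :
    ∃ C : ℝ, 0 < C ∧
      ∀ Ω : Set (EuclideanSpace ℝ (Fin n)), IsOpen Ω → Bornology.IsBounded Ω →
        (∀ x ∈ closure Ω, ∃ ξ : EuclideanSpace ℝ (Fin n), ‖ξ‖ = 1 ∧
          {p : EuclideanSpace ℝ (Fin n) | ∃ y : EuclideanSpace ℝ (Fin n),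
            p = x + y ∧ 0 < ‖y‖ ∧ ‖y‖ < h ∧ ‖y‖ * Real.cos θ < (inner ℝ y ξ : ℝ)} ⊆ Ω) →
        ∀ v : EuclideanSpace ℝ (Fin n) → ℝ, ContDiff ℝ 1 v →
          (⨆ x ∈ closure Ω, |v x|) ≤
            ε * ((⨆ x ∈ closure Ω, |v x|) + ⨆ x ∈ closure Ω, ‖fderiv ℝ v x‖)
              + C * ∫ x in Ω, |v x| := by
  obtain ⟨hθ₀, hθ⟩ := hθ
  have hcos : Real.cos θ < 1 := by
    simpa using Real.cos_lt_cos_of_nonneg_of_le_pi le_rfl (by linarith [Real.pi_pos]) hθ₀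
  set δ := min h ε
  set ξ₀ : EuclideanSpace ℝ (Fin n) := EuclideanSpace.single ⟨0, hn⟩ 1
  have hξ₀ : ‖ξ₀‖ = 1 := by simp [ξ₀]
  set c := volume.real (openCone ξ₀ θ δ)
  have hc : 0 < c := measureReal_openCone_pos volume hξ₀ hcos (lt_min hh hε)
  refine ⟨1 / c, by positivity, fun Ω _ hΩ hcone v hv => ?_⟩
  set M := ⨆ x ∈ closure Ω, |v x|
  set K := ⨆ x ∈ closure Ω, ‖fderiv ℝ v x‖
  have hM₀ : 0 ≤ M := Real.iSup_nonneg fun _ => Real.iSup_nonneg fun _ => abs_nonneg _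
  have hK₀ : 0 ≤ K := Real.iSup_nonneg fun _ => Real.iSup_nonneg fun _ => norm_nonneg _
  have hI₀ : 0 ≤ ∫ x in Ω, |v x| := integral_nonneg fun _ => abs_nonneg _
  suffices hM : M ≤ ε * K + 1 / c * ∫ x in Ω, |v x| by
    rw [mul_add]; linarith [mul_nonneg hε.le hM₀]
  rcases (closure Ω).eq_empty_or_nonempty with hempty | hne
  · exact Real.biSup_le (by positivity) fun x hx => (hempty ▸ hx : x ∈ (∅ : Set _)).elim
  have hcompact := hΩ.isCompact_closure
  obtain ⟨x₀, hx₀, hmax⟩ := hcompact.exists_isMaxOn hne hv.continuous.abs.continuousOn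
  obtain ⟨ξ, hξ, hξcone⟩ := hcone x₀ hx₀
  have hK : ∀ z ∈ closure Ω, ‖fderiv ℝ v z‖ ≤ K := fun z hz => Real.le_biSup
    (hcompact.bddAbove_image (hv.continuous_fderiv one_ne_zero).norm.continuousOn) hz
  have key := mul_measureReal_openCone_le_setIntegral volume
    ((hv.continuous.continuousOn.integrableOn_compact hcompact).mono_set subset_closure)
    (hv.differentiable one_ne_zero) hK hx₀
    (fun y hy => hξcone ⟨y, rfl, hy.1, hy.2.1.trans_le (min_le_left h ε), hy.2.2⟩)
  rw [Measure.real, volume_openCone_of_norm_eq (hξ.trans hξ₀.symm)] at key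
  have hKδ : K * δ ≤ K * ε := mul_le_mul_of_nonneg_left (min_le_right h ε) hK₀
  calc M ≤ |v x₀| := Real.biSup_le (abs_nonneg _) hmax
    _ ≤ K * δ + 1 / c * ∫ x in Ω, |v x| := by
        rw [one_div_mul_eq_div, ← sub_le_iff_le_add', le_div_iff₀ hc]; exact key
    _ ≤ ε * K + 1 / c * ∫ x in Ω, |v x| := by linarith
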